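/- arXiv:1309.5285 — 6 statements merged into one kernel-verified Lean document; each statement's English description precedes it below -/
import Mathlib

section
/- The value functions of the truncated problems converge pointwise to the value function of the original problem: for every x > 0, lim_{C→∞} V_C(x) = V(x), where V(x) = sup_τ E[∫₀^τ e^{-rs}Π(X(s))ds] and V_C is the analogous supremum for the process truncated (frozen at 0) at first hitting of level C. -/
open MeasureTheory ProbabilityTheory Set Filter

open Classical in
/-- Convergence of the value functions of the truncated problems to the value function of
the original problem: `lim_{C→∞} V_C(x) = V(x)`. -/
theorem truncated_value_tendsto
    {Ω : Type*} [MeasureSpace Ω] [IsProbabilityMeasure (ℙ : Measure Ω)]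
    (r : ℝ) (hr : 0 < r)
    (X : ℝ → Ω → ℝ) (hXpos : ∀ t ω, 0 ≤ X t ω)
    (hcont : ∀ ω, Continuous fun t => X t ω)
    (ν : ℝ → Ω → ℝ)
    (hν : ∀ C ω t, 0 ≤ t → (t < ν C ω ↔ ∀ s ∈ Icc (0 : ℝ) t, X s ω < C))
    (XC : ℝ → ℝ → Ω → ℝ)
    (hXC : ∀ C t ω, XC C t ω = if t < ν C ω then X t ω else 0)
    (Pi : ℝ → ℝ) (hmono : Monotone Pi) (hPi0 : ∀ x ≥ (0 : ℝ), Pi 0 ≤ Pi x)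
    -- the set of admissible stopping times (nonnegative random times)
    (T : Set (Ω → ℝ)) (hT : ∀ τ ∈ T, (Measurable τ ∧ ∀ ω, 0 ≤ τ ω)) (hTne : T.Nonempty)
    -- integrability: `E[∫₀^∞ e^{-rs}|Π(X(s))| ds] < ∞`
    (habs : Integrable (fun ω => ∫ s in Ioi (0 : ℝ), Real.exp (-r * s) * |Pi (X s ω)|))
    (habs' : ∀ ω, IntegrableOn (fun s => Real.exp (-r * s) * |Pi (X s ω)|) (Ioi (0 : ℝ)))
    (hint : ∀ τ ∈ T, ∀ C : ℝ,
      Integrable (fun ω => ∫ s in Ioc 0 (τ ω), Real.exp (-r * s) * Pi (X s ω)) ∧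
      Integrable (fun ω => ∫ s in Ioc 0 (τ ω), Real.exp (-r * s) * Pi (XC C s ω)))
    (hbdd : BddAbove ((fun τ => ∫ ω, ∫ s in Ioc 0 (τ ω),
        Real.exp (-r * s) * Pi (X s ω)) '' T)) :
    Tendsto (fun C =>
        sSup ((fun τ => ∫ ω, ∫ s in Ioc 0 (τ ω), Real.exp (-r * s) * Pi (XC C s ω)) '' T))
      atTop
      (nhds (sSup ((fun τ => ∫ ω, ∫ s in Ioc 0 (τ ω),
        Real.exp (-r * s) * Pi (X s ω)) '' T))) := by
  -- abbreviations
  set J : (Ω → ℝ) → ℝ :=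
    fun τ => ∫ ω, ∫ s in Ioc 0 (τ ω), Real.exp (-r * s) * Pi (X s ω) with hJ
  set F : ℝ → (Ω → ℝ) → ℝ :=
    fun C τ => ∫ ω, ∫ s in Ioc 0 (τ ω), Real.exp (-r * s) * Pi (XC C s ω) with hF
  set L : ℝ := sSup (J '' T) with hL
  -- measurability in s
  have hmX : ∀ ω, Measurable fun s => Real.exp (-r * s) * Pi (X s ω) := fun ω =>
    ((Real.continuous_exp.comp (continuous_const.mul continuous_id)).measurable).mul
      (hmono.measurable.comp (hcont ω).measurable)
  have hmXC : ∀ C ω, Measurable fun s => Real.exp (-r * s) * Pi (XC C s ω) := by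
    intro C ω
    have : (fun s => Real.exp (-r * s) * Pi (XC C s ω))
        = fun s => Real.exp (-r * s) * Pi (if s < ν C ω then X s ω else 0) := by
      funext s; rw [hXC]
    rw [this]
    exact ((Real.continuous_exp.comp (continuous_const.mul continuous_id)).measurable).mul
      (hmono.measurable.comp
        (Measurable.ite measurableSet_Iio (hcont ω).measurable measurable_const))
  -- sandwich
  have hsand : ∀ C s ω, Pi 0 ≤ Pi (XC C s ω) ∧ Pi (XC C s ω) ≤ Pi (X s ω) := by
    intro C s ω
    rw [hXC]
    split
    · exact ⟨hPi0 _ (hXpos s ω), le_rfl⟩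
    · exact ⟨le_rfl, hPi0 _ (hXpos s ω)⟩
  -- integrability of the abs-integrand on Ioc
  have habsIoc : ∀ ω (b : ℝ),
      IntegrableOn (fun s => Real.exp (-r * s) * |Pi (X s ω)|) (Ioc 0 b) := fun ω b =>
    (habs' ω).mono_set Ioc_subset_Ioi_self
  have hInt1 : ∀ ω (b : ℝ),
      IntegrableOn (fun s => Real.exp (-r * s) * Pi (X s ω)) (Ioc 0 b) := by
    intro ω b
    have h' : IntegrableOn (fun s => ‖Real.exp (-r * s) * Pi (X s ω)‖) (Ioc 0 b) :=
      (habsIoc ω b).congr (Eventually.of_forall fun s => by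
        simp only [Real.norm_eq_abs, abs_mul, Real.abs_exp])
    exact (integrable_norm_iff ((hmX ω).aestronglyMeasurable.restrict)).mp h'
  -- the pointwise norm bound for the truncated integrand
  have hnorm_bd : ∀ C ω s, ‖Real.exp (-r * s) * Pi (XC C s ω)‖ ≤
      Real.exp (-r * s) * |Pi (X s ω)| + Real.exp (-r * s) * |Pi 0| := by
    intro C ω s
    have h1 := (hsand C s ω).1
    have h2 := (hsand C s ω).2
    have h3 : |Pi (XC C s ω)| ≤ |Pi (X s ω)| + |Pi 0| :=
      abs_le.mpr ⟨by linarith [neg_abs_le (Pi 0), abs_nonneg (Pi (X s ω))],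
        by linarith [le_abs_self (Pi (X s ω)), abs_nonneg (Pi 0)]⟩
    rw [Real.norm_eq_abs, abs_mul, Real.abs_exp, ← mul_add]
    exact mul_le_mul_of_nonneg_left h3 (Real.exp_pos _).le
  -- the dominating function on Ioc
  have hdomIoc : ∀ ω (b : ℝ), IntegrableOn
      (fun s => Real.exp (-r * s) * |Pi (X s ω)| + Real.exp (-r * s) * |Pi 0|) (Ioc 0 b) := by
    intro ω b
    exact (habsIoc ω b).add
      (((Real.continuous_exp.comp (continuous_const.mul continuous_id)).mul
        continuous_const).integrableOn_Ioc)
  have hInt2 : ∀ C ω (b : ℝ),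
      IntegrableOn (fun s => Real.exp (-r * s) * Pi (XC C s ω)) (Ioc 0 b) := by
    intro C ω b
    exact (hdomIoc ω b).mono' ((hmXC C ω).aestronglyMeasurable.restrict)
      (Eventually.of_forall fun s => hnorm_bd C ω s)
  -- pointwise inner inequality
  have hg_le : ∀ C (τ : Ω → ℝ) ω,
      (∫ s in Ioc 0 (τ ω), Real.exp (-r * s) * Pi (XC C s ω)) ≤
      ∫ s in Ioc 0 (τ ω), Real.exp (-r * s) * Pi (X s ω) := by
    intro C τ ω
    exact setIntegral_mono (hInt2 C ω (τ ω)) (hInt1 ω (τ ω))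
      (fun s => mul_le_mul_of_nonneg_left (hsand C s ω).2 (Real.exp_pos _).le)
  -- F C τ ≤ J τ ≤ L
  have hFJ : ∀ C, ∀ τ ∈ T, F C τ ≤ J τ := fun C τ hτ =>
    integral_mono (hint τ hτ C).2 (hint τ hτ C).1 (fun ω => hg_le C τ ω)
  have hFL : ∀ C, ∀ τ ∈ T, F C τ ≤ L := fun C τ hτ =>
    (hFJ C τ hτ).trans (le_csSup hbdd ⟨τ, hτ, rfl⟩)
  have hbddC : ∀ C, BddAbove (F C '' T) := by
    intro C
    exact ⟨L, by rintro _ ⟨τ, hτ, rfl⟩; exact hFL C τ hτ⟩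
  have hupper : ∀ C, sSup (F C '' T) ≤ L := fun C =>
    csSup_le (hTne.image _) (by rintro _ ⟨τ, hτ, rfl⟩; exact hFL C τ hτ)
  -- dominated convergence: F C τ → J τ
  have hDCT : ∀ τ ∈ T, Tendsto (fun C => F C τ) atTop (nhds (J τ)) := by
    intro τ hτ
    refine tendsto_integral_filter_of_dominated_convergence
      (fun ω => (∫ s in Ioi (0:ℝ), Real.exp (-r * s) * |Pi (X s ω)|) +
        (∫ s in Ioi (0:ℝ), Real.exp (-r * s)) * |Pi 0|)
      (Eventually.of_forall fun C => ((hint τ hτ C).2).aestronglyMeasurable) ?_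
      (habs.add (integrable_const _)) ?_
    · refine Eventually.of_forall fun C => Eventually.of_forall fun ω => ?_
      calc ‖∫ s in Ioc 0 (τ ω), Real.exp (-r * s) * Pi (XC C s ω)‖
          ≤ ∫ s in Ioc 0 (τ ω), ‖Real.exp (-r * s) * Pi (XC C s ω)‖ :=
            norm_integral_le_integral_norm _
        _ ≤ ∫ s in Ioc 0 (τ ω),
              (Real.exp (-r * s) * |Pi (X s ω)| + Real.exp (-r * s) * |Pi 0|) :=
            setIntegral_mono ((hInt2 C ω (τ ω)).norm) (hdomIoc ω (τ ω))
              (fun s => hnorm_bd C ω s)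
        _ ≤ ∫ s in Ioi (0:ℝ),
              (Real.exp (-r * s) * |Pi (X s ω)| + Real.exp (-r * s) * |Pi 0|) := by
            refine setIntegral_mono_set
              ((habs' ω).add (((exp_neg_integrableOn_Ioi 0 hr).mul_const |Pi 0|)))
              (Eventually.of_forall fun s => ?_)
              (HasSubset.Subset.eventuallyLE Ioc_subset_Ioi_self)
            positivity
        _ = (∫ s in Ioi (0:ℝ), Real.exp (-r * s) * |Pi (X s ω)|) +
              (∫ s in Ioi (0:ℝ), Real.exp (-r * s)) * |Pi 0| := by
            rw [integral_add (habs' ω) ((exp_neg_integrableOn_Ioi 0 hr).mul_const _),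
              integral_mul_const]
    · refine Eventually.of_forall fun ω => ?_
      obtain ⟨M, hM⟩ := (isCompact_Icc.image_of_continuousOn
        ((hcont ω).continuousOn : ContinuousOn (fun t => X t ω) (Icc 0 (τ ω)))).bddAbove
      refine Tendsto.congr' ?_ (tendsto_const_nhds :
        Tendsto (fun _ : ℝ => ∫ s in Ioc 0 (τ ω), Real.exp (-r * s) * Pi (X s ω))
          atTop _)
      filter_upwards [eventually_ge_atTop (M + 1)] with C hC
      refine setIntegral_congr_fun measurableSet_Ioc fun s hs => ?_
      have hsν : s < ν C ω := by
        rw [hν C ω s hs.1.le]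
        intro u hu
        have huM : X u ω ≤ M := hM ⟨u, ⟨hu.1, hu.2.trans hs.2⟩, rfl⟩
        linarith
      rw [hXC, if_pos hsν]
  -- conclude
  rw [show (nhds (sSup (J '' T))) = nhds L from rfl]
  refine tendsto_order.2 ⟨?_, ?_⟩
  · intro a ha
    obtain ⟨_, ⟨τ, hτ, rfl⟩, haJ⟩ := exists_lt_of_lt_csSup (hTne.image J) ha
    filter_upwards [(hDCT τ hτ).eventually (eventually_gt_nhds haJ)] with C hC
    exact hC.trans_le (le_csSup (hbddC C) ⟨τ, hτ, rfl⟩)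
  · intro a ha
    exact Eventually.of_forall fun C => lt_of_le_of_lt (hupper C) ha
end

section
/- Define ψ : ℝ⁵ → ℝ³ by ψ(A₁, A₂, x, ε₁, ε₂) = (A₁ + ε₁A₂ + ε₂, A₁x^{D₁} + A₂x^{D₂} + Bx² - K/r, D₁A₁x^{D₁} + D₂A₂x^{D₂} + 2Bx²). At the point (A₁^∞, A₂^∞, x*^∞, 0, 0) with A₁^∞ = 0, x*^∞ = ((-D₂/(2-D₂))·(K/r)/B)^{1/2}, A₂^∞ = (2/(2-D₂))·(K/r)·(x*^∞)^{-D₂}, the determinant of the Jacobian of ψ with respect to (A₁, A₂, x) equals (4 - 2D₂)·B·(x*^∞)^{D₂+1}, which is nonzero. -/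
/-!
At `ε = 0` the first row of the Jacobian is `(1, 0, 0)`, so the determinant is the `2 × 2` minor
in `(A₂, x)`. In that minor the terms `A₂ x^{D₂ - 1}` cancel, which leaves
`(4 - 2D₂) B x^{D₂ + 1}`; this is nonzero because `x*^∞ > 0` and `D₂ < 0`.
-/

open Real

theorem hasDerivAt_mul_rpow_add_mul_sq {x : ℝ} (hx : x ≠ 0) (D a b : ℝ) :
    HasDerivAt (fun y => a * y ^ D + b * y ^ 2) (a * (D * x ^ (D - 1)) + b * (2 * x)) x := by
  have h := ((hasDerivAt_rpow_const (p := D) (Or.inl hx)).const_mul a).fun_add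
    ((hasDerivAt_pow 2 x).const_mul b)
  norm_num at h
  exact h

theorem rpow_sq_jacobian_minor {x : ℝ} (hx : 0 < x) (D a b : ℝ) :
    x ^ D * (D * a * (D * x ^ (D - 1)) + 2 * b * (2 * x))
      - (a * (D * x ^ (D - 1)) + b * (2 * x)) * (D * x ^ D) = (4 - 2 * D) * b * x ^ (D + 1) := by
  rw [rpow_add hx, rpow_one]
  ring

theorem jacobian_det_ne_zero_general (D₁ D₂ B K r : ℝ)
    (hD₂ : D₂ < 0) (hB : 0 < B) (hK : 0 < K) (hr : 0 < r)
    (xs A₂s : ℝ)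
    (hxs : xs = Real.sqrt (-D₂ / (2 - D₂) * (K / r) / B))
    (ψ₁ ψ₂ ψ₃ : ℝ → ℝ → ℝ → ℝ → ℝ → ℝ)
    (hψ₁ : ∀ a₁ a₂ x e₁ e₂, ψ₁ a₁ a₂ x e₁ e₂ = a₁ + e₁ * a₂ + e₂)
    (hψ₂ : ∀ a₁ a₂ x e₁ e₂, ψ₂ a₁ a₂ x e₁ e₂ = a₁ * x ^ D₁ + a₂ * x ^ D₂ + B * x ^ (2 : ℕ) - K / r)
    (hψ₃ : ∀ a₁ a₂ x e₁ e₂, ψ₃ a₁ a₂ x e₁ e₂ = D₁ * a₁ * x ^ D₁ + D₂ * a₂ * x ^ D₂ + 2 * B * x ^ (2 : ℕ)) :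
    Matrix.det
      !![deriv (fun a => ψ₁ a A₂s xs 0 0) 0, deriv (fun a => ψ₁ 0 a xs 0 0) A₂s,
           deriv (fun x => ψ₁ 0 A₂s x 0 0) xs;
         deriv (fun a => ψ₂ a A₂s xs 0 0) 0, deriv (fun a => ψ₂ 0 a xs 0 0) A₂s,
           deriv (fun x => ψ₂ 0 A₂s x 0 0) xs;
         deriv (fun a => ψ₃ a A₂s xs 0 0) 0, deriv (fun a => ψ₃ 0 a xs 0 0) A₂s,
           deriv (fun x => ψ₃ 0 A₂s x 0 0) xs]
      = (4 - 2 * D₂) * B * xs ^ (D₂ + 1) ∧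
    (4 - 2 * D₂) * B * xs ^ (D₂ + 1) ≠ 0 := by
  have hx : 0 < xs := by
    have hratio : 0 < -D₂ / (2 - D₂) := div_pos (by linarith) (by linarith)
    exact hxs ▸ sqrt_pos.2 (by positivity)
  have hψ₂x := (hasDerivAt_mul_rpow_add_mul_sq hx.ne' D₂ A₂s B).deriv
  have hψ₃x := (hasDerivAt_mul_rpow_add_mul_sq hx.ne' D₂ (D₂ * A₂s) (2 * B)).deriv
  refine ⟨?_, mul_ne_zero (mul_ne_zero (by linarith) hB.ne') (rpow_pos_of_pos hx _).ne'⟩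
  simpa [Matrix.det_fin_three, hψ₁, hψ₂, hψ₃, hψ₂x, hψ₃x] using rpow_sq_jacobian_minor hx D₂ A₂s B

/-- The Jacobian determinant of `ψ` with respect to `(A₁, A₂, x)` at the limit point
`(A₁^∞, A₂^∞, x*^∞, 0, 0)` equals `(4 - 2D₂)·B·(x*^∞)^{D₂+1} ≠ 0`. -/
theorem jacobian_det_ne_zero (D₁ D₂ B K r : ℝ)
    (hD₂ : D₂ < 0) (hD₁ : 2 < D₁) (hB : 0 < B) (hK : 0 < K) (hr : 0 < r)
    (xs A₂s : ℝ)
    (hxs : xs = Real.sqrt (-D₂ / (2 - D₂) * (K / r) / B))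
    (hA₂ : A₂s = 2 / (2 - D₂) * (K / r) * xs ^ (-D₂))
    (ψ₁ ψ₂ ψ₃ : ℝ → ℝ → ℝ → ℝ → ℝ → ℝ)
    (hψ₁ : ∀ a₁ a₂ x e₁ e₂, ψ₁ a₁ a₂ x e₁ e₂ = a₁ + e₁ * a₂ + e₂)
    (hψ₂ : ∀ a₁ a₂ x e₁ e₂, ψ₂ a₁ a₂ x e₁ e₂ = a₁ * x ^ D₁ + a₂ * x ^ D₂ + B * x ^ (2 : ℕ) - K / r)
    (hψ₃ : ∀ a₁ a₂ x e₁ e₂, ψ₃ a₁ a₂ x e₁ e₂ = D₁ * a₁ * x ^ D₁ + D₂ * a₂ * x ^ D₂ + 2 * B * x ^ (2 : ℕ)) :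
    Matrix.det
      !![deriv (fun a => ψ₁ a A₂s xs 0 0) 0, deriv (fun a => ψ₁ 0 a xs 0 0) A₂s,
           deriv (fun x => ψ₁ 0 A₂s x 0 0) xs;
         deriv (fun a => ψ₂ a A₂s xs 0 0) 0, deriv (fun a => ψ₂ 0 a xs 0 0) A₂s,
           deriv (fun x => ψ₂ 0 A₂s x 0 0) xs;
         deriv (fun a => ψ₃ a A₂s xs 0 0) 0, deriv (fun a => ψ₃ 0 a xs 0 0) A₂s,
           deriv (fun x => ψ₃ 0 A₂s x 0 0) xs]
      = (4 - 2 * D₂) * B * xs ^ (D₂ + 1) ∧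
    (4 - 2 * D₂) * B * xs ^ (D₂ + 1) ≠ 0 :=
  jacobian_det_ne_zero_general D₁ D₂ B K r hD₂ hB hK hr xs A₂s hxs ψ₁ ψ₂ ψ₃ hψ₁ hψ₂ hψ₃
end

section
/- With ψ as above and the Jacobian determinant nonzero, there exist open neighborhoods V ⊂ ℝ² of (0,0) and U ⊂ ℝ³ of (A₁^∞, A₂^∞, x*^∞) and a unique C¹ function φ : V → U with φ(0,0) = (A₁^∞, A₂^∞, x*^∞) such that ψ(φ(ε₁, ε₂), ε₁, ε₂) = 0 for all (ε₁, ε₂) ∈ V; consequently the solutions (A₁(C), A₂(C), x*_C) of the truncated smooth-fit system converge to (A₁^∞, A₂^∞, x*^∞) as C → ∞. -/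
/-!
At `ε = 0` the smooth-fit system decouples: `A₁ = 0`, and the two remaining equations are solved
in closed form by `x*^∞ = √(-D₂ K / ((2 - D₂) r B))` and `A₂^∞ = 2 K x*^∞^(-D₂) / ((2 - D₂) r)`.
The Jacobian of `ψ` in `(A₁, A₂, x)` at this point is triangular up to a `2 × 2` block of
determinant `2 B x (2 - D₂) x^D₂ ≠ 0`, so the `C¹` implicit function theorem applies. Convergence
of the truncated solutions follows from continuity of `φ` at `0` and uniqueness of solutions in `U`.
-/

open Real Filter Set Topology
open scoped ContDiff

section ImplicitFunction

variable {𝕜 : Type*} [RCLike 𝕜]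
  {E₁ : Type*} [NormedAddCommGroup E₁] [NormedSpace 𝕜 E₁]
  {E₂ : Type*} [NormedAddCommGroup E₂] [NormedSpace 𝕜 E₂]
  {F : Type*} [NormedAddCommGroup F] [NormedSpace 𝕜 F]

theorem ContDiffAt.exists_isOpen_implicitFunction [CompleteSpace E₁] [CompleteSpace E₂]
    [CompleteSpace F] {f : E₁ × E₂ → F} {u : E₁ × E₂} {n : ℕ∞ω}
    (hf : ContDiffAt 𝕜 n f u) (hn : n ≠ 0) (hn' : n ≠ ∞)
    (hinv : (fderiv 𝕜 f u ∘L .inr 𝕜 E₁ E₂).IsInvertible) :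
    ∃ (V : Set E₁) (U : Set E₂) (φ : E₁ → E₂),
      IsOpen V ∧ u.1 ∈ V ∧ IsOpen U ∧ u.2 ∈ U ∧ ContDiffOn 𝕜 n φ V ∧ φ u.1 = u.2 ∧
      (∀ p ∈ V, φ p ∈ U ∧ f (p, φ p) = f u) ∧
      (∀ p ∈ V, ∀ q ∈ U, f (p, q) = f u → q = φ p) := by
  have hφu := hf.implicitFunction_apply_self hn hinv
  have hφ := hf.contDiffAt_implicitFunction hn hinv
  obtain ⟨V₀, U, hV₀, hu₁V₀, hU, hu₂U, hVU⟩ :=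
    mem_nhds_prod_iff'.1 (hf.eventually_apply_eq_iff_implicitFunction hn hinv)
  generalize hf.implicitFunction hn hinv = φ at *
  have hU' : ∀ᶠ p in 𝓝 u.1, φ p ∈ U :=
    hφ.continuousAt.preimage_mem_nhds (by rw [hφu]; exact hU.mem_nhds hu₂U)
  obtain ⟨V, hV_spec, hV, hu₁V⟩ := eventually_nhds_iff.1
    ((Eventually.and (hV₀.mem_nhds hu₁V₀) hU').and (hφ.eventually hn'))
  refine ⟨V, U, φ, hV, hu₁V, hU, hu₂U, fun p hp => (hV_spec p hp).2.contDiffWithinAt, hφu,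
    fun p hp => ⟨(hV_spec p hp).1.2, ?_⟩, fun p hp q hq hpq => ?_⟩
  · exact (hVU (mk_mem_prod (hV_spec p hp).1.1 (hV_spec p hp).1.2)).2 rfl
  · exact ((hVU (mk_mem_prod (hV_spec p hp).1.1 hq)).1 hpq).symm

theorem fderiv_comp_inr {f : E₁ × E₂ → F} {u : E₁ × E₂} (hf : DifferentiableAt 𝕜 f u) :
    fderiv 𝕜 f u ∘L .inr 𝕜 E₁ E₂ = fderiv 𝕜 (fun y => f (u.1, y)) u.2 :=
  ((hf.hasFDerivAt.comp u.2 (hasFDerivAt_prodMk_right u.1 u.2))).fderiv.symm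

end ImplicitFunction

theorem ContinuousLinearMap.isInvertible_of_injective {𝕜 E : Type*} [NontriviallyNormedField 𝕜]
    [CompleteSpace 𝕜] [NormedAddCommGroup E] [NormedSpace 𝕜 E] [FiniteDimensional 𝕜 E]
    {f : E →L[𝕜] E} (hf : Function.Injective f) : f.IsInvertible :=
  ⟨(LinearEquiv.ofInjectiveEndo (f : E →ₗ[𝕜] E) hf).toContinuousLinearEquiv, rfl⟩

theorem tendsto_of_eventually_unique_solution {α P Q : Type*} [TopologicalSpace P]
    [TopologicalSpace Q] {R : P → Q → Prop} {V : Set P} {U : Set Q} {φ : P → Q} {p₀ : P}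
    (hφ : ContinuousAt φ p₀) (huniq : ∀ p ∈ V, ∀ q ∈ U, R p q → q = φ p)
    {l : Filter α} {ε : α → P} {sol : α → Q} (hε : Tendsto ε l (𝓝 p₀))
    (hsol : ∀ᶠ C in l, ε C ∈ V ∧ sol C ∈ U ∧ R (ε C) (sol C)) :
    Tendsto sol l (𝓝 (φ p₀)) :=
  (hφ.tendsto.comp hε).congr' <| hsol.mono fun _ h => (huniq _ h.1 _ h.2.1 h.2.2).symm

noncomputable def smoothFitMap (D₁ D₂ B K r : ℝ) (q : ℝ × ℝ × ℝ) (ε : ℝ × ℝ) : ℝ × ℝ × ℝ :=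
  (q.1 + ε.1 * q.2.1 + ε.2,
   q.1 * q.2.2 ^ D₁ + q.2.1 * q.2.2 ^ D₂ + B * q.2.2 ^ 2 - K / r,
   D₁ * q.1 * q.2.2 ^ D₁ + D₂ * q.2.1 * q.2.2 ^ D₂ + 2 * B * q.2.2 ^ 2)

theorem smoothFitMap_limit_eq_zero {D₁ D₂ B K r a₂ x : ℝ} (hD₂ : D₂ ≠ 2) (hB : B ≠ 0) (hx : 0 < x)
    (hx_sq : x ^ 2 = -D₂ / (2 - D₂) * (K / r) / B)
    (ha₂ : a₂ = 2 / (2 - D₂) * (K / r) * x ^ (-D₂)) :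
    smoothFitMap D₁ D₂ B K r (0, a₂, x) (0, 0) = 0 := by
  have hD₂x : a₂ * x ^ D₂ = 2 / (2 - D₂) * (K / r) := by
    rw [ha₂, mul_assoc, ← rpow_add hx, neg_add_cancel, rpow_zero, mul_one]
  have hBx : B * x ^ 2 = -D₂ / (2 - D₂) * (K / r) := by
    rw [hx_sq]; field_simp
  have h2D₂ : 2 - D₂ ≠ 0 := sub_ne_zero.2 hD₂.symm
  simp only [smoothFitMap, Prod.ext_iff, Prod.fst_zero, Prod.snd_zero]
  refine ⟨by ring, ?_, ?_⟩
  · linear_combination (norm := skip) hD₂x + hBx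
    field_simp; ring
  · linear_combination (norm := skip) D₂ * hD₂x + 2 * hBx
    field_simp; ring

theorem contDiffAt_smoothFitMap {D₁ D₂ B K r : ℝ} {n : ℕ∞ω} {z : (ℝ × ℝ) × (ℝ × ℝ × ℝ)}
    (hx : z.2.2.2 ≠ 0) :
    ContDiffAt ℝ n (fun z : (ℝ × ℝ) × (ℝ × ℝ × ℝ) => smoothFitMap D₁ D₂ B K r z.2 z.1) z := by
  unfold smoothFitMap
  fun_prop (disch := exact hx)

theorem isInvertible_fderiv_smoothFitMap {D₁ D₂ B K r a₂ x : ℝ} (hD₂ : D₂ ≠ 2) (hB : B ≠ 0)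
    (hx : 0 < x) :
    (fderiv ℝ (fun q => smoothFitMap D₁ D₂ B K r q 0) (0, a₂, x)).IsInvertible := by
  set q₀ : ℝ × ℝ × ℝ := (0, a₂, x)
  have ha₁ := hasFDerivAt_fst (𝕜 := ℝ) (p := q₀)
  have ha₂ := (hasFDerivAt_snd (𝕜 := ℝ) (p := q₀)).fst
  have hx' := (hasFDerivAt_snd (𝕜 := ℝ) (p := q₀)).snd
  have hxD₁ := hx'.rpow_const (p := D₁) (Or.inl hx.ne')
  have hxD₂ := hx'.rpow_const (p := D₂) (Or.inl hx.ne')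
  have hx2 := hx'.pow 2
  have hd := ha₁.prodMk <| HasFDerivAt.prodMk
    ((((ha₁.mul hxD₁).add (ha₂.mul hxD₂)).add (hx2.const_mul B)).sub_const (K / r))
    ((((ha₁.const_mul D₁).mul hxD₁).add ((ha₂.const_mul D₂).mul hxD₂)).add (hx2.const_mul (2 * B)))
  rw [show (fun q => smoothFitMap D₁ D₂ B K r q 0) = _ from ?_, hd.fderiv]
  · apply ContinuousLinearMap.isInvertible_of_injective
    rw [injective_iff_map_eq_zero]
    rintro ⟨a, b, c⟩ hv
    simp only [zero_smul, zero_add, Nat.add_one_sub_one, pow_one, nsmul_eq_mul, Nat.cast_ofNat, mul_zero,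
      ContinuousLinearMap.prod_apply, ContinuousLinearMap.coe_fst', add_apply, smul_apply, smul_eq_mul,
      ContinuousLinearMap.comp_apply, ContinuousLinearMap.coe_snd', Prod.ext_iff, Prod.fst_zero,
      Prod.snd_zero, q₀] at hv
    obtain ⟨rfl, h₂, h₃⟩ := hv
    have hc : c = 0 := by
      have : (2 * B * x * (2 - D₂)) * c = 0 := by linear_combination h₃ - D₂ * h₂
      simpa [hB, hx.ne', sub_eq_zero, hD₂.symm] using this
    subst hc
    have hb : b = 0 := by
      have : x ^ D₂ * b = 0 := by simpa using h₂
      exact (mul_eq_zero.1 this).resolve_left (rpow_pos_of_pos hx D₂).ne'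
    simp [hb]
  · funext q; simp [smoothFitMap]

theorem implicit_function_and_convergence_general (D₁ D₂ B K r : ℝ)
    (hD₂ : D₂ < 0) (hB : 0 < B) (hK : 0 < K) (hr : 0 < r)
    (xs A₂s : ℝ)
    (hxs : xs = Real.sqrt (-D₂ / (2 - D₂) * (K / r) / B))
    (hA₂ : A₂s = 2 / (2 - D₂) * (K / r) * xs ^ (-D₂))
    (ψ : ℝ × ℝ × ℝ → ℝ × ℝ → ℝ × ℝ × ℝ)
    (hψ : ∀ a₁ a₂ x e₁ e₂, ψ (a₁, a₂, x) (e₁, e₂) =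
      (a₁ + e₁ * a₂ + e₂,
       a₁ * x ^ D₁ + a₂ * x ^ D₂ + B * x ^ (2 : ℕ) - K / r,
       D₁ * a₁ * x ^ D₁ + D₂ * a₂ * x ^ D₂ + 2 * B * x ^ (2 : ℕ))) :
    ∃ (V : Set (ℝ × ℝ)) (U : Set (ℝ × ℝ × ℝ)) (φ : ℝ × ℝ → ℝ × ℝ × ℝ),
      IsOpen V ∧ (0, 0) ∈ V ∧ IsOpen U ∧ ((0 : ℝ), A₂s, xs) ∈ U ∧
      ContDiffOn ℝ 1 φ V ∧ φ (0, 0) = ((0 : ℝ), A₂s, xs) ∧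
      (∀ p ∈ V, φ p ∈ U ∧ ψ (φ p) p = 0) ∧
      -- uniqueness: any solution of the system lying in `U` agrees with `φ`
      (∀ p ∈ V, ∀ q ∈ U, ψ q p = 0 → q = φ p) ∧
      -- consequently, solutions of the truncated systems converge to the limit point
      (∀ sol : ℝ → ℝ × ℝ × ℝ, ∀ ε : ℝ → ℝ × ℝ,
        Tendsto ε atTop (nhds (0, 0)) →
        (∀ᶠ C in atTop, ε C ∈ V ∧ sol C ∈ U ∧ ψ (sol C) (ε C) = 0) →
        Tendsto sol atTop (nhds ((0 : ℝ), A₂s, xs))) := by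
  obtain rfl : ψ = smoothFitMap D₁ D₂ B K r := by
    funext ⟨a₁, a₂, x⟩ ⟨e₁, e₂⟩
    exact hψ a₁ a₂ x e₁ e₂
  have hD₂_ne_two : D₂ ≠ 2 := by linarith
  have harg : 0 < -D₂ / (2 - D₂) * (K / r) / B :=
    div_pos (mul_pos (div_pos (neg_pos.2 hD₂) (by linarith)) (div_pos hK hr)) hB
  have hxs₀ : 0 < xs := hxs ▸ sqrt_pos.2 harg
  have hroot := smoothFitMap_limit_eq_zero (D₁ := D₁) hD₂_ne_two hB.ne' hxs₀
    (by rw [hxs, sq_sqrt harg.le]) hA₂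
  have hf : ContDiffAt ℝ 1 (fun z : (ℝ × ℝ) × (ℝ × ℝ × ℝ) => smoothFitMap D₁ D₂ B K r z.2 z.1)
      ((0, 0), (0, A₂s, xs)) :=
    contDiffAt_smoothFitMap hxs₀.ne'
  obtain ⟨V, U, φ, hV, h0V, hU, hqU, hφ, hφ0, hsol, huniq⟩ :=
    hf.exists_isOpen_implicitFunction one_ne_zero (by simp) <| by
      rw [fderiv_comp_inr (hf.differentiableAt one_ne_zero)]
      exact isInvertible_fderiv_smoothFitMap hD₂_ne_two hB.ne' hxs₀
  dsimp only at h0V hqU hφ0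
  simp only [hroot] at hsol huniq
  refine ⟨V, U, φ, hV, h0V, hU, hqU, hφ, hφ0, hsol, huniq, fun sol ε hε hsolC => ?_⟩
  rw [← hφ0]
  exact tendsto_of_eventually_unique_solution (R := fun p q => smoothFitMap D₁ D₂ B K r q p = 0)
    (hφ.continuousOn.continuousAt (hV.mem_nhds h0V)) huniq hε hsolC

/-- Implicit function theorem for the smooth-fit system: there are neighborhoods
`V ∋ (0,0)` and `U ∋ (A₁^∞, A₂^∞, x*^∞)` and a unique `C¹` map `φ : V → U` solving
`ψ(φ(ε₁,ε₂), ε₁, ε₂) = 0`; consequently the solutions of the truncated systems converge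
to `(A₁^∞, A₂^∞, x*^∞)` as `C → ∞`. -/
theorem implicit_function_and_convergence (D₁ D₂ B K r : ℝ)
    (hD₂ : D₂ < 0) (hD₁ : 2 < D₁) (hB : 0 < B) (hK : 0 < K) (hr : 0 < r)
    (xs A₂s : ℝ)
    (hxs : xs = Real.sqrt (-D₂ / (2 - D₂) * (K / r) / B))
    (hA₂ : A₂s = 2 / (2 - D₂) * (K / r) * xs ^ (-D₂))
    (ψ : ℝ × ℝ × ℝ → ℝ × ℝ → ℝ × ℝ × ℝ)
    (hψ : ∀ a₁ a₂ x e₁ e₂, ψ (a₁, a₂, x) (e₁, e₂) =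
      (a₁ + e₁ * a₂ + e₂,
       a₁ * x ^ D₁ + a₂ * x ^ D₂ + B * x ^ (2 : ℕ) - K / r,
       D₁ * a₁ * x ^ D₁ + D₂ * a₂ * x ^ D₂ + 2 * B * x ^ (2 : ℕ))) :
    ∃ (V : Set (ℝ × ℝ)) (U : Set (ℝ × ℝ × ℝ)) (φ : ℝ × ℝ → ℝ × ℝ × ℝ),
      IsOpen V ∧ (0, 0) ∈ V ∧ IsOpen U ∧ ((0 : ℝ), A₂s, xs) ∈ U ∧
      ContDiffOn ℝ 1 φ V ∧ φ (0, 0) = ((0 : ℝ), A₂s, xs) ∧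
      (∀ p ∈ V, φ p ∈ U ∧ ψ (φ p) p = 0) ∧
      -- uniqueness: any solution of the system lying in `U` agrees with `φ`
      (∀ p ∈ V, ∀ q ∈ U, ψ q p = 0 → q = φ p) ∧
      -- consequently, solutions of the truncated systems converge to the limit point
      (∀ sol : ℝ → ℝ × ℝ × ℝ, ∀ ε : ℝ → ℝ × ℝ,
        Tendsto ε atTop (nhds (0, 0)) →
        (∀ᶠ C in atTop, ε C ∈ V ∧ sol C ∈ U ∧ ψ (sol C) (ε C) = 0) →
        Tendsto sol atTop (nhds ((0 : ℝ), A₂s, xs))) :=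
  implicit_function_and_convergence_general D₁ D₂ B K r hD₂ hB hK hr xs A₂s hxs hA₂ ψ hψ
end

section
/- Let D₂ < 0, K > 0, r > 0, B > 0 and set x* = ((-D₂/(2-D₂))·(K/r)/B)^{1/2}, A₂ = (2/(2-D₂))·(K/r)·(x*)^{-D₂}, and v(x) = A₂x^{D₂} + Bx² - K/r for x > 0. Then v(x*) = 0 and v′(x*) = 0. -/
open Real

/-- The closed-form parameters of the limit value function satisfy the value-matching and
smooth-pasting conditions at the threshold `x*`: `v(x*) = 0` and `v′(x*) = 0`. -/
theorem smooth_fit_at_threshold (D₂ K r B : ℝ)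
    (hD₂ : D₂ < 0) (hK : 0 < K) (hr : 0 < r) (hB : 0 < B)
    (xs A₂ : ℝ)
    (hxs : xs = Real.sqrt (-D₂ / (2 - D₂) * (K / r) / B))
    (hA₂ : A₂ = 2 / (2 - D₂) * (K / r) * xs ^ (-D₂))
    (v : ℝ → ℝ)
    (hv : ∀ x > (0 : ℝ), v x = A₂ * x ^ D₂ + B * x ^ (2 : ℕ) - K / r) :
    v xs = 0 ∧ deriv v xs = 0 := by
  have h2D : (0:ℝ) < 2 - D₂ := by linarith
  have harg : (0:ℝ) < -D₂ / (2 - D₂) * (K / r) / B :=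
    div_pos (mul_pos (div_pos (by linarith) h2D) (div_pos hK hr)) hB
  have hxs_pos : 0 < xs := by rw [hxs]; exact Real.sqrt_pos.mpr harg
  have hxs_ne : xs ≠ 0 := ne_of_gt hxs_pos
  have hsq : xs ^ (2:ℕ) = -D₂ / (2 - D₂) * (K / r) / B := by
    rw [hxs, sq, Real.mul_self_sqrt harg.le]
  have hrpow : xs ^ (-D₂) * xs ^ D₂ = 1 := by
    rw [← Real.rpow_add hxs_pos]; simp
  have hBx2 : B * xs ^ (2:ℕ) = -D₂ / (2 - D₂) * (K / r) := by
    rw [hsq]; field_simp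
  have hterm : A₂ * xs ^ D₂ = 2 / (2 - D₂) * (K / r) := by
    rw [hA₂, mul_assoc, hrpow, mul_one]
  constructor
  · rw [hv xs hxs_pos, hterm, hBx2]
    field_simp
    ring
  · have hEq : v =ᶠ[nhds xs] fun x => A₂ * x ^ D₂ + B * x ^ (2:ℕ) - K / r := by
      filter_upwards [IsOpen.mem_nhds isOpen_Ioi hxs_pos] with x hx
      exact hv x hx
    rw [hEq.deriv_eq]
    have h1 : HasDerivAt (fun x : ℝ => A₂ * x ^ D₂ + B * x ^ (2:ℕ) - K / r)
        (A₂ * (D₂ * xs ^ (D₂ - 1)) + B * (2 * xs ^ (1:ℕ))) xs := by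
      exact (((Real.hasDerivAt_rpow_const (Or.inl hxs_ne)).const_mul A₂).add
        ((hasDerivAt_pow 2 xs).const_mul B)).sub_const (K / r)
    rw [h1.deriv]
    have h2 : xs ^ (-D₂) * xs ^ (D₂ - 1) = xs⁻¹ := by
      rw [← Real.rpow_add hxs_pos]
      have : -D₂ + (D₂ - 1) = -1 := by ring
      rw [this, Real.rpow_neg_one]
    have h3 : A₂ * (D₂ * xs ^ (D₂ - 1)) = 2 / (2 - D₂) * (K / r) * xs⁻¹ * D₂ := by
      rw [hA₂]; rw [show 2 / (2 - D₂) * (K / r) * xs ^ (-D₂) * (D₂ * xs ^ (D₂ - 1))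
        = 2 / (2 - D₂) * (K / r) * (xs ^ (-D₂) * xs ^ (D₂-1)) * D₂ by ring, h2]
    rw [h3]
    have h4 : B * (2 * xs ^ (1:ℕ)) = 2 * (B * xs ^ (2:ℕ)) * xs⁻¹ := by
      field_simp
    rw [h4, hBx2]
    field_simp
    ring
end

section
/- Let D₂ < 0, K > 0, r > 0, B > 0, x* = ((-D₂/(2-D₂))·(K/r)/B)^{1/2}, A₂ = (2/(2-D₂))·(K/r)·(x*)^{-D₂}, and v(x) = A₂x^{D₂} + Bx² - K/r. Then v(x) > 0 for all x > x*. -/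
open Real

/- With `t = x / x*`, the constants `A₂` and `B x*²` (fixed by `v(x*) = v'(x*) = 0`) put `v` in the
form `v(x) = (K/r)/(2 - D₂) · (2 t^{D₂} - D₂ t² - (2 - D₂))`, and for `D₂ < 0` the bracket is
positive once `t > 1`: the tangent bounds `t^{D₂} ≥ 1 + D₂ log t` and `log t < (t² - 1)/2` make
`2 t^{D₂} - D₂ t²` exceed its value `2 - D₂` at `t = 1`. -/

lemma two_sub_lt_two_mul_rpow_sub_mul_sq {p t : ℝ} (hp : p < 0) (ht : 1 < t) :
    2 - p < 2 * t ^ p - p * t ^ 2 := by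
  have ht0 : 0 < t := one_pos.trans ht
  have hlog_pos : 0 < log t := log_pos ht
  have hlog_lt : log t < t - 1 := log_lt_sub_one_of_pos ht0 ht.ne'
  have hrpow : 1 + p * log t ≤ t ^ p := by
    rw [rpow_def_of_pos ht0, mul_comm]
    linarith [add_one_le_exp (log t * p)]
  have hsq : 2 * log t < t ^ 2 - 1 := by nlinarith [sq_nonneg (t - 1)]
  nlinarith [mul_lt_mul_of_neg_left hsq hp]

lemma value_eq_of_smooth_fit {D c B A xs x : ℝ} (hD : D ≠ 2) (hxs : 0 < xs) (hx : 0 < x)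
    (hB : B * xs ^ 2 = -D / (2 - D) * c) (hA : A = 2 / (2 - D) * c * xs ^ (-D)) :
    A * x ^ D + B * x ^ 2 - c =
      c / (2 - D) * (2 * (x / xs) ^ D - D * (x / xs) ^ 2 - (2 - D)) := by
  have h2D : 2 - D ≠ 0 := sub_ne_zero.mpr hD.symm
  have hinv : xs ^ (-D) * xs ^ D = 1 := by
    rw [← rpow_add hxs, neg_add_cancel, rpow_zero]
  have hxD : x ^ D = (x / xs) ^ D * xs ^ D := by
    rw [← mul_rpow (div_pos hx hxs).le hxs.le, div_mul_cancel₀ x hxs.ne']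
  have hx2 : B * x ^ 2 = (x / xs) ^ 2 * (B * xs ^ 2) := by
    rw [div_pow]; field_simp
  rw [hxD, hx2, hB, hA]
  generalize x / xs = t
  field_simp
  linear_combination (2 * c * t ^ D) * hinv

/-- The limit value function `v(x) = A₂x^{D₂} + Bx² - K/r` is strictly positive above the
exit threshold `x*`. -/
theorem value_positive_above_threshold (D₂ K r B : ℝ)
    (hD₂ : D₂ < 0) (hK : 0 < K) (hr : 0 < r) (hB : 0 < B)
    (xs A₂ : ℝ)
    (hxs : xs = Real.sqrt (-D₂ / (2 - D₂) * (K / r) / B))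
    (hA₂ : A₂ = 2 / (2 - D₂) * (K / r) * xs ^ (-D₂))
    (v : ℝ → ℝ)
    (hv : ∀ x > (0 : ℝ), v x = A₂ * x ^ D₂ + B * x ^ (2 : ℕ) - K / r) :
    ∀ x > xs, 0 < v x := by
  intro x hx
  have h2D : 0 < 2 - D₂ := by linarith
  have hKr : 0 < K / r := div_pos hK hr
  have hradicand : 0 < -D₂ / (2 - D₂) * (K / r) / B :=
    div_pos (mul_pos (div_pos (neg_pos.mpr hD₂) h2D) hKr) hB
  have hxs_pos : 0 < xs := hxs ▸ sqrt_pos.mpr hradicand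
  have hBxs : B * xs ^ 2 = -D₂ / (2 - D₂) * (K / r) := by
    rw [hxs, sq_sqrt hradicand.le]; field_simp
  have hx_pos : 0 < x := hxs_pos.trans hx
  rw [hv x hx_pos, value_eq_of_smooth_fit (by linarith) hxs_pos hx_pos hBxs hA₂]
  have hbracket := two_sub_lt_two_mul_rpow_sub_mul_sq hD₂ ((one_lt_div hxs_pos).mpr hx)
  exact mul_pos (div_pos hKr h2D) (by linarith)
end

section
/- With x* = ((-D₂/(2-D₂))·(K/r)·(4(r-2α-σ²)/γ²))^{1/2} and D₂ < 0 the negative root of -(σ²/2)D² + (σ²/2-α)D + r = 0, r > σ² + 2α, K > 0, γ > 0, it holds that K - γ²(x*)²/4 ≥ 0, i.e. x* ≤ 2√K/γ, so the stopping region lies inside the set where instantaneous profit is non-positive. -/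
open Real

/-- The optimal exit threshold satisfies `K - γ²(x*)²/4 ≥ 0`, i.e. `x* ≤ 2√K/γ`: the
stopping region lies inside the set where instantaneous profit is non-positive. -/
theorem threshold_in_loss_region (r σ α γ K D₂ : ℝ)
    (hσ : 0 < σ) (hγ : 0 < γ) (hK : 0 < K) (h : σ ^ 2 + 2 * α < r)
    (hD₂ : D₂ < 0)
    (hroot : -(σ ^ 2 / 2) * D₂ ^ 2 + (σ ^ 2 / 2 - α) * D₂ + r = 0)
    (xs : ℝ)
    (hxs : xs = Real.sqrt (-D₂ / (2 - D₂) * (K / r) * (4 * (r - 2 * α - σ ^ 2) / γ ^ 2))) :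
    0 ≤ K - γ ^ 2 * xs ^ (2 : ℕ) / 4 ∧ xs ≤ 2 * Real.sqrt K / γ := by
  have hr : 0 < r := by nlinarith [sq_nonneg D₂, sq_nonneg σ, mul_pos hσ hσ]
  have h2D : 0 < 2 - D₂ := by linarith
  set A : ℝ := -D₂ / (2 - D₂) * (K / r) * (4 * (r - 2 * α - σ ^ 2) / γ ^ 2) with hA
  have hAnn : 0 ≤ A :=
    mul_nonneg (mul_nonneg (div_nonneg (by linarith) h2D.le) (by positivity))
      (div_nonneg (by nlinarith) (by positivity))
  have hxsq : xs ^ (2 : ℕ) = A := by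
    rw [hxs, sq_sqrt hAnn]
  -- key inequality: A ≤ 4K/γ²
  have hkey : A ≤ 4 * K / γ ^ 2 := by
    rw [hA, div_mul_div_comm, div_mul_div_comm, div_le_div_iff₀ (by positivity) (by positivity)]
    have h2r : D₂ * (σ ^ 2 + 2 * α) ≤ 2 * r := by
      nlinarith [mul_pos (mul_pos hσ hσ) (mul_pos (neg_pos.mpr hD₂) h2D)]
    nlinarith [mul_pos hK hr, mul_nonneg hK.le (sub_nonneg.mpr h2r), sq_nonneg γ]
  have h1 : 0 ≤ K - γ ^ 2 * xs ^ (2 : ℕ) / 4 := by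
    rw [hxsq]
    have hg2 : (0:ℝ) < γ ^ 2 := by positivity
    have := (le_div_iff₀ hg2).mp hkey
    nlinarith
  refine ⟨h1, ?_⟩
  have : 2 * Real.sqrt K / γ = Real.sqrt (4 * K / γ ^ 2) := by
    rw [Real.sqrt_div' _ (by positivity), show (4:ℝ) * K = 2^2 * K by ring,
      Real.sqrt_mul (by positivity), Real.sqrt_sq (by norm_num : (0:ℝ) ≤ 2),
      Real.sqrt_sq hγ.le]
  rw [this, hxs]
  exact Real.sqrt_le_sqrt hkey
end
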